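/- In any crossed n-cube of groups (M_A), for each A ⊆ B ⊆ ⟨n⟩ the assignment (a, b) ↦ ^a b := h(a,b)·b defines an action of the group M_A on the group M_B by automorphisms. -/

import Mathlib

/-- Transport of an element along an equality of index sets. -/
def fc {n : ℕ} {M : Finset (Fin n) → Type*} {A B : Finset (Fin n)}
    (hAB : A = B) (a : M A) : M B := hAB ▸ a

namespace CNC

variable {n : ℕ}

lemma erase_swap (A : Finset (Fin n)) (i j : Fin n) :
    (A.erase j).erase i = (A.erase i).erase j := by
  ext x; simp [Finset.mem_erase]; try tauto

lemma erase_union (A B : Finset (Fin n)) (i : Fin n) :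
    A.erase i ∪ B.erase i = (A ∪ B).erase i := by
  ext x; simp [Finset.mem_erase, Finset.mem_union]; try tauto

lemma erase_union_of_mem {B : Finset (Fin n)} {i : Fin n} (A : Finset (Fin n))
    (hi : i ∈ B) : A.erase i ∪ B = A ∪ B := by
  ext x; simp [Finset.mem_erase, Finset.mem_union]
  rcases Decidable.em (x = i) with h | h <;> simp [h, hi] <;> tauto

lemma union_erase_of_mem {A : Finset (Fin n)} {i : Fin n} (B : Finset (Fin n))
    (hi : i ∈ A) : A ∪ B.erase i = A ∪ B := by
  ext x; simp [Finset.mem_erase, Finset.mem_union]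
  rcases Decidable.em (x = i) with h | h <;> simp [h, hi] <;> tauto

lemma union_self (A : Finset (Fin n)) : A ∪ A = A := by
  ext x; simp

lemma union_comm' (A B : Finset (Fin n)) : B ∪ A = A ∪ B := by
  ext x; simp [Finset.mem_union]; try tauto

lemma union_left_absorb (A B : Finset (Fin n)) : A ∪ (A ∪ B) = A ∪ B := by
  ext x; simp [Finset.mem_union]; try tauto

lemma union_right_absorb (A B : Finset (Fin n)) : B ∪ (A ∪ B) = A ∪ B := by
  ext x; simp [Finset.mem_union]; try tauto

lemma jac1 (A B C : Finset (Fin n)) : A ∪ ((A ∪ B) ∪ C) = (A ∪ B) ∪ C := by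
  ext x; simp [Finset.mem_union]; try tauto

lemma jac2 (A B C : Finset (Fin n)) : C ∪ ((C ∪ A) ∪ B) = (C ∪ A) ∪ B := by
  ext x; simp [Finset.mem_union]; try tauto

lemma jac2' (A B C : Finset (Fin n)) : (C ∪ A) ∪ B = (A ∪ B) ∪ C := by
  ext x; simp [Finset.mem_union]; try tauto

lemma jac3 (A B C : Finset (Fin n)) : B ∪ ((B ∪ C) ∪ A) = (B ∪ C) ∪ A := by
  ext x; simp [Finset.mem_union]; try tauto

lemma jac3' (A B C : Finset (Fin n)) : (B ∪ C) ∪ A = (A ∪ B) ∪ C := by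
  ext x; simp [Finset.mem_union]; try tauto

lemma union_of_subset {A B : Finset (Fin n)} (hAB : A ⊆ B) : A ∪ B = B :=
  Finset.union_eq_right.mpr hAB


end CNC

open scoped commutatorElement

open CNC in
/-- A crossed `n`-cube of groups (Ellis–Steiner): a family of groups `M A`
for `A ⊆ ⟨n⟩`, morphisms `μᵢ : M A → M (A∖{i})` and functions
`h : M A × M B → M (A∪B)` satisfying axioms (1)–(11), where `ᵃb` denotes
`h(a,b)·b`. -/
structure CrossedNCube (n : ℕ) (M : Finset (Fin n) → Type*)
    [∀ A, Group (M A)] where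
  mu : ∀ (i : Fin n) (A : Finset (Fin n)), M A →* M (A.erase i)
  h : ∀ (A B : Finset (Fin n)), M A → M B → M (A ∪ B)
  ax1 : ∀ (i : Fin n) (A : Finset (Fin n)) (hi : i ∉ A) (a : M A),
    mu i A a = fc (Finset.erase_eq_of_notMem hi).symm a
  ax2 : ∀ (i j : Fin n) (A : Finset (Fin n)) (a : M A),
    mu i (A.erase j) (mu j A a) =
      fc (erase_swap A i j).symm (mu j (A.erase i) (mu i A a))
  ax3 : ∀ (i : Fin n) (A B : Finset (Fin n)) (a : M A) (b : M B),
    mu i (A ∪ B) (h A B a b) =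
      fc (erase_union A B i) (h (A.erase i) (B.erase i) (mu i A a) (mu i B b))
  ax4a : ∀ (i : Fin n) (A B : Finset (Fin n)), i ∈ A → ∀ hiB : i ∈ B,
    ∀ (a : M A) (b : M B),
    h A B a b = fc (erase_union_of_mem A hiB) (h (A.erase i) B (mu i A a) b)
  ax4b : ∀ (i : Fin n) (A B : Finset (Fin n)), ∀ hiA : i ∈ A, i ∈ B →
    ∀ (a : M A) (b : M B),
    h A B a b = fc (union_erase_of_mem B hiA) (h A (B.erase i) a (mu i B b))
  ax5 : ∀ (A : Finset (Fin n)) (a a' : M A),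
    h A A a a' = fc (union_self A).symm ⁅a, a'⁆
  ax6 : ∀ (A B : Finset (Fin n)) (a : M A) (b : M B),
    h A B a b = (fc (union_comm' A B) (h B A b a))⁻¹
  ax7a : ∀ (A B : Finset (Fin n)) (b : M B), h A B 1 b = 1
  ax7b : ∀ (A B : Finset (Fin n)) (a : M A), h A B a 1 = 1
  ax8 : ∀ (A B : Finset (Fin n)) (a a' : M A) (b : M B),
    h A B (a * a') b =
      (fc (union_left_absorb A B) (h A (A ∪ B) a (h A B a' b)) *
          h A B a' b) * h A B a b
  ax9 : ∀ (A B : Finset (Fin n)) (a : M A) (b b' : M B),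
    h A B a (b * b') =
      h A B a b *
        (fc (union_right_absorb A B) (h B (A ∪ B) b (h A B a b')) *
          h A B a b')
  ax10 : ∀ (A B C : Finset (Fin n)) (a : M A) (b : M B) (c : M C),
    (fc (jac1 A B C)
        (h A ((A ∪ B) ∪ C) a (h (A ∪ B) C (h A B a⁻¹ b) c)) *
      h (A ∪ B) C (h A B a⁻¹ b) c) *
    fc (jac2' A B C)
      (fc (jac2 A B C)
          (h C ((C ∪ A) ∪ B) c (h (C ∪ A) B (h C A c⁻¹ a) b)) *
        h (C ∪ A) B (h C A c⁻¹ a) b) *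
    fc (jac3' A B C)
      (fc (jac3 A B C)
          (h B ((B ∪ C) ∪ A) b (h (B ∪ C) A (h B C b⁻¹ c) a)) *
        h (B ∪ C) A (h B C b⁻¹ c) a) = 1
  ax11 : ∀ (A B C : Finset (Fin n)) (hAB : A ⊆ B) (hAC : A ⊆ C)
      (a : M A) (b : M B) (c : M C),
    fc (union_of_subset (hAB.trans Finset.subset_union_left))
        (h A (B ∪ C) a (h B C b c)) * h B C b c =
      h B C (fc (union_of_subset hAB) (h A B a b) * b)
        (fc (union_of_subset hAC) (h A C a c) * c)

/-- The map `(a, b) ↦ ᵃb := h(a,b)·b` for `A ⊆ B`. -/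
def ncAct' {n : ℕ} {M : Finset (Fin n) → Type*} [∀ A, Group (M A)]
    (X : CrossedNCube n M) {A B : Finset (Fin n)} (hAB : A ⊆ B)
    (a : M A) (b : M B) : M B :=
  fc (CNC.union_of_subset hAB) (X.h A B a b) * b

/-!
Put `h' a b := h(a, b) ∈ M_B` for `a ∈ M_A`, `b ∈ M_B`, so that `ᵃb = h' a b * b`. For
`A ⊆ B` axiom (5) identifies `h(b, ·)` on `M_B` with the commutator `⁅b, ·⁆`, so axiom (9)
reads `h' a (b * b') = h' a b * b * h' a b' * b⁻¹`, which is exactly `ᵃ(b b') = ᵃb ᵃb'`.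
Axiom (8), `h' (a * a') b = h' a (h' a' b) * h' a' b * h' a b`, combined with this
expansion of `h' a (h' a' b * b)` gives `ᵃᵃ'b = ᵃ(ᵃ'b)`, and axiom (7) gives `¹b = b`.
-/

section Transport

variable {n : ℕ} {M : Finset (Fin n) → Type*}

lemma fc_fc {A B C : Finset (Fin n)} (h₁ : A = B) (h₂ : B = C) (x : M A) :
    fc h₂ (fc h₁ x) = fc (h₁.trans h₂) x := by
  subst h₁ h₂; rfl

variable [∀ A, Group (M A)]

lemma fc_one {A B : Finset (Fin n)} (h : A = B) : fc h (1 : M A) = 1 := by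
  subst h; rfl

lemma fc_mul {A B : Finset (Fin n)} (h : A = B) (x y : M A) :
    fc h (x * y) = fc h x * fc h y := by
  subst h; rfl

end Transport

namespace CrossedNCube

variable {n : ℕ} {M : Finset (Fin n) → Type*} [∀ A, Group (M A)] (X : CrossedNCube n M)

lemma h_congr_right {A C C' D : Finset (Fin n)} (hC : C = C') (hU : A ∪ C = D)
    (hU' : A ∪ C' = D) (a : M A) (c : M C) :
    fc hU (X.h A C a c) = fc hU' (X.h A C' a (fc hC c)) := by
  subst hC; rfl

lemma h_eq_commutator {B C : Finset (Fin n)} (hC : C = B) (hU : B ∪ C = B)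
    (b : M B) (c : M C) : fc hU (X.h B C b c) = ⁅b, fc hC c⁆ := by
  subst hC
  rw [X.ax5, fc_fc]
  rfl

def hSub {A B : Finset (Fin n)} (hAB : A ⊆ B) (a : M A) (b : M B) : M B :=
  fc (CNC.union_of_subset hAB) (X.h A B a b)

variable {A B : Finset (Fin n)} (hAB : A ⊆ B)

lemma ncAct'_eq_hSub_mul (a : M A) (b : M B) : ncAct' X hAB a b = X.hSub hAB a b * b :=
  rfl

lemma hSub_one_left (b : M B) : X.hSub hAB 1 b = 1 := by
  rw [hSub, X.ax7a, fc_one]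

lemma hSub_mul_left (a a' : M A) (b : M B) :
    X.hSub hAB (a * a') b =
      X.hSub hAB a (X.hSub hAB a' b) * X.hSub hAB a' b * X.hSub hAB a b := by
  have e : A ∪ B = B := CNC.union_of_subset hAB
  rw [hSub, X.ax8, fc_mul, fc_mul, fc_fc, X.h_congr_right e _ e]
  rfl

lemma hSub_mul_right (a : M A) (b b' : M B) :
    X.hSub hAB a (b * b') = X.hSub hAB a b * b * X.hSub hAB a b' * b⁻¹ := by
  rw [hSub, X.ax9, fc_mul, fc_mul, fc_fc,
    X.h_eq_commutator (CNC.union_of_subset hAB), commutatorElement_def]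
  simp only [hSub]
  group

end CrossedNCube

/-- In any crossed `n`-cube of groups `(M_A)`, for each `A ⊆ B ⊆ ⟨n⟩` the
assignment `(a, b) ↦ ᵃb := h(a,b)·b` defines an action of the group `M A` on
the group `M B` by automorphisms. -/
theorem crossedNCube_h_action {n : ℕ}
    {M : Finset (Fin n) → Type*} [∀ A, Group (M A)]
    (X : CrossedNCube n M) {A B : Finset (Fin n)} (hAB : A ⊆ B) :
    (∀ b : M B, ncAct' X hAB 1 b = b) ∧
    (∀ (a a' : M A) (b : M B),
      ncAct' X hAB (a * a') b = ncAct' X hAB a (ncAct' X hAB a' b)) ∧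
    (∀ (a : M A) (b b' : M B),
      ncAct' X hAB a (b * b') = ncAct' X hAB a b * ncAct' X hAB a b') := by
  simp only [X.ncAct'_eq_hSub_mul hAB]
  refine ⟨fun b => ?_, fun a a' b => ?_, fun a b b' => ?_⟩
  · rw [X.hSub_one_left, one_mul]
  · rw [X.hSub_mul_left, X.hSub_mul_right]
    group
  · rw [X.hSub_mul_right]
    group
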